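/- For k odd, the Clifford quadratic form α_Cl(2k,0) on (Z/2)^{2k} is equivalent to the direct sum of (k+1)/2 copies of α_Cl(2,0) and (k−1)/2 copies of α_Cl(0,2); and α_Cl(0,2k) is equivalent to the direct sum of (k−1)/2 copies of α_Cl(2,0) and (k+1)/2 copies of α_Cl(0,2). -/

import Mathlib

/-!
Group the coordinates into consecutive pairs `(u_m, v_m)` and let `S_m` be the sum of the
coordinates of the pairs before the `m`-th. Then
`Σ_{i<j} x_i x_j = Σ_m (u_m v_m + S_m (u_m + v_m))`, and over `ℤ/2` the triangular involution
`u_m ↦ u_m + S_m`, `v_m ↦ v_m + S_m` (which keeps every pair sum and every `S_m`) turns the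
`m`-th term into `u_m v_m + S_m`, because `S_m² = S_m`. As
`Σ_m S_m = Σ_m (k - 1 - m)(u_m + v_m)`, `α_Cl(2k,0)` becomes the sum of the blocks
`uv + (k - 1 - m)(u + v)`; the linear part `Σ x_i` of `α_Cl(0,2k)` adds `1` to every
coefficient. For odd `k` the blocks with coefficient `1` are those of one parity of `m`, and
permuting the pairs by `j ↦ 2j + b mod k` moves them to the end.
-/

/-- The Clifford generating quadratic form `α_Cl(p,q)` on `(ℤ/2)^m`, `m = p+q`:
`Σ_{i<j} x_i x_j + Σ_{i>p} x_i` (0-based: linear terms for indices `≥ p`). -/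
def cliffordForm (p q : ℕ) (x : Fin (p + q) → ZMod 2) : ZMod 2 :=
  (∑ t ∈ Finset.univ.filter
      (fun t : Fin (p + q) × Fin (p + q) => t.1 < t.2), x t.1 * x t.2)
  + ∑ i ∈ Finset.univ.filter (fun i : Fin (p + q) => p ≤ (i : ℕ)), x i

open Finset

section Sequences

variable {R : Type*} [CommRing R]

theorem sum_range_two_mul_eq_sum_pairs (f : ℕ → R) (m : ℕ) :
    ∑ i ∈ range (2 * m), f i = ∑ i ∈ range m, (f (2 * i) + f (2 * i + 1)) := by
  induction m with
  | zero => simp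
  | succ m ih => rw [Nat.mul_succ, sum_range_succ, sum_range_succ, sum_range_succ, ih, add_assoc]

theorem sum_range_sum_range_eq_sum_natCast_mul (f : ℕ → R) (k : ℕ) :
    ∑ m ∈ range k, ∑ i ∈ range m, f i =
      ∑ i ∈ range k, ((k - 1 - i : ℕ) : R) * f i := by
  induction k with
  | zero => simp
  | succ k ih =>
    rw [sum_range_succ, ih, sum_range_succ, Nat.add_sub_cancel, Nat.sub_self, Nat.cast_zero,
      zero_mul, add_zero, ← sum_add_distrib]
    refine sum_congr rfl fun i hi => ?_
    rw [mem_range] at hi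
    rw [show k - i = k - 1 - i + 1 by omega, Nat.cast_succ]
    ring

theorem sum_triangle_eq_sum_pairs (x : ℕ → R) (k : ℕ) :
    ∑ j ∈ range (2 * k), ∑ i ∈ range j, x i * x j =
      ∑ m ∈ range k, (x (2 * m) * x (2 * m + 1) +
        (∑ i ∈ range (2 * m), x i) * (x (2 * m) + x (2 * m + 1))) := by
  induction k with
  | zero => simp
  | succ k ih =>
    rw [Nat.mul_succ, sum_range_succ, sum_range_succ, ih, sum_range_succ, sum_range_succ,
      ← sum_mul, ← sum_mul]
    ring

def shear : (ℕ → R) →ₗ[R] (ℕ → R) where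
  toFun y i := y i + ∑ j ∈ range (2 * (i / 2)), y j
  map_add' y z := by
    ext i
    simp only [Pi.add_apply, sum_add_distrib]
    ring
  map_smul' c y := by
    ext i
    simp only [Pi.smul_apply, smul_eq_mul, RingHom.id_apply, mul_sum, mul_add]

theorem shear_apply (y : ℕ → R) (i : ℕ) :
    shear y i = y i + ∑ j ∈ range (2 * (i / 2)), y j := rfl

theorem shear_apply_congr {y z : ℕ → R} {i : ℕ} (h : ∀ j ≤ i, y j = z j) :
    shear y i = shear z i := by
  rw [shear_apply, shear_apply, h i le_rfl]
  congr 1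
  exact sum_congr rfl fun j hj => h j (by rw [mem_range] at hj; omega)

theorem shear_two_mul (y : ℕ → R) (m : ℕ) :
    shear y (2 * m) = y (2 * m) + ∑ j ∈ range (2 * m), y j := by
  rw [shear_apply, Nat.mul_div_cancel_left m two_pos]

theorem shear_two_mul_add_one (y : ℕ → R) (m : ℕ) :
    shear y (2 * m + 1) = y (2 * m + 1) + ∑ j ∈ range (2 * m), y j := by
  rw [shear_apply, show (2 * m + 1) / 2 = m by omega]

variable [CharP R 2]

theorem shear_pair_add (y : ℕ → R) (m : ℕ) :
    shear y (2 * m) + shear y (2 * m + 1) = y (2 * m) + y (2 * m + 1) := by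
  rw [shear_two_mul, shear_two_mul_add_one]
  linear_combination CharTwo.add_self_eq_zero (∑ j ∈ range (2 * m), y j)

theorem sum_range_two_mul_shear (y : ℕ → R) (m : ℕ) :
    ∑ i ∈ range (2 * m), shear y i = ∑ i ∈ range (2 * m), y i := by
  simp only [sum_range_two_mul_eq_sum_pairs, shear_pair_add]

theorem shear_shear (y : ℕ → R) : shear (shear y) = y := by
  ext i
  rw [shear_apply, sum_range_two_mul_shear, shear_apply, add_assoc,
    CharTwo.add_self_eq_zero, add_zero]

end Sequences

theorem sum_triangle_shear (y : ℕ → ZMod 2) (k : ℕ) :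
    ∑ j ∈ range (2 * k), ∑ i ∈ range j, shear y i * shear y j =
      ∑ m ∈ range k, (y (2 * m) * y (2 * m + 1) +
        ((k - 1 - m : ℕ) : ZMod 2) * (y (2 * m) + y (2 * m + 1))) := by
  calc _ = ∑ m ∈ range k, (y (2 * m) * y (2 * m + 1) + ∑ i ∈ range (2 * m), y i) := by
        rw [sum_triangle_eq_sum_pairs]
        refine sum_congr rfl fun m _ => ?_
        rw [shear_pair_add, sum_range_two_mul_shear, shear_two_mul, shear_two_mul_add_one]
        -- the cross terms cancel in pairs and `S ^ 2 = S` in `ZMod 2`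
        set S := ∑ i ∈ range (2 * m), y i
        linear_combination (y (2 * m) * S + y (2 * m + 1) * S) * ZMod.natCast_self 2 +
          ZMod.pow_card S
    _ = _ := by
        simp only [sum_add_distrib, mul_add, sum_range_two_mul_eq_sum_pairs y,
          sum_range_sum_range_eq_sum_natCast_mul]

theorem extend_val_of_lt {R : Type*} [Zero R] {n i : ℕ} (x : Fin n → R) (hi : i < n) :
    Function.extend Fin.val x 0 i = x ⟨i, hi⟩ :=
  Fin.val_injective.extend_apply x 0 ⟨i, hi⟩

section ShearEquiv

variable (R : Type*) [CommRing R] [CharP R 2] (n : ℕ)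

/-- `shear` on `Fin n`-vectors; still an involution because `shear` is triangular. -/
noncomputable def shearEquiv : (Fin n → R) ≃ₗ[R] (Fin n → R) :=
  LinearEquiv.ofInvolutive
    (LinearMap.funLeft R R Fin.val ∘ₗ shear ∘ₗ Function.ExtendByZero.linearMap R Fin.val)
    fun y => by
      ext i
      set z := Function.extend Fin.val y 0
      change shear (Function.extend Fin.val (fun i : Fin n => shear z i) 0) i = y i
      have hsupp : ∀ j ≤ (i : ℕ),
          Function.extend Fin.val (fun i : Fin n => shear z i) 0 j = shear z j :=
        fun j hj => extend_val_of_lt _ (hj.trans_lt i.isLt)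
      rw [shear_apply_congr hsupp, shear_shear]
      exact Fin.val_injective.extend_apply y 0 i

end ShearEquiv

section FinToNat

variable {R : Type*} [CommRing R] {n : ℕ} (x : Fin n → R) (w : ℕ → R)

theorem sum_filter_lt_eq_sum_triangle (hw : ∀ i : Fin n, x i = w i) :
    ∑ t ∈ univ.filter (fun t : Fin n × Fin n => t.1 < t.2), x t.1 * x t.2 =
      ∑ j ∈ range n, ∑ i ∈ range j, w i * w j := by
  calc _ = ∑ j : Fin n, ∑ i : Fin n, if (i : ℕ) < j then w i * w j else 0 := by
        simp only [sum_filter, Fintype.sum_prod_type_right, Fin.lt_def, hw]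
    _ = ∑ j ∈ range n, ∑ i ∈ range n, if i < j then w i * w j else 0 := by
        simp only [Finset.sum_range]
    _ = _ := sum_congr rfl fun j hj => by
        rw [← sum_filter, range_eq_Ico, Ico_filter_lt, min_eq_right (mem_range.mp hj).le,
          ← range_eq_Ico]

theorem sum_filter_le_eq_sum_Ico (hw : ∀ i : Fin n, x i = w i) (p : ℕ) :
    ∑ i ∈ univ.filter (fun i : Fin n => p ≤ (i : ℕ)), x i = ∑ i ∈ Ico p n, w i := by
  calc _ = ∑ i : Fin n, if p ≤ (i : ℕ) then w i else 0 := by simp only [sum_filter, hw]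
    _ = ∑ i ∈ range n, if p ≤ i then w i else 0 := by simp only [Finset.sum_range]
    _ = _ := by rw [← sum_filter, range_eq_Ico, Ico_filter_le, max_eq_right p.zero_le]

end FinToNat

theorem cliffordForm_cast {p q n : ℕ} (h : p + q = n) (x : Fin n → ZMod 2) (w : ℕ → ZMod 2)
    (hw : ∀ i : Fin n, x i = w i) :
    cliffordForm p q (fun i => x (Fin.cast h i)) =
      (∑ j ∈ range n, ∑ i ∈ range j, w i * w j) + ∑ i ∈ Ico p n, w i := by
  subst h
  exact congrArg₂ (· + ·) (sum_filter_lt_eq_sum_triangle x w hw)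
    (sum_filter_le_eq_sum_Ico x w hw p)

theorem sum_Ico_two_mul_shear {R : Type*} [CommRing R] [CharP R 2] (y : ℕ → R) {r k : ℕ}
    (h : r ≤ k) :
    ∑ i ∈ Ico (2 * r) (2 * k), shear y i =
      ∑ m ∈ range k, if r ≤ m then y (2 * m) + y (2 * m + 1) else 0 := by
  rw [← sum_filter, range_eq_Ico, Ico_filter_le, max_eq_right r.zero_le,
    sum_Ico_eq_sub _ (by omega), sum_Ico_eq_sub _ h, sum_range_two_mul_shear,
    sum_range_two_mul_shear, sum_range_two_mul_eq_sum_pairs, sum_range_two_mul_eq_sum_pairs]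

/-- `Σ_j (x_{2j} x_{2j+1} + c_j (x_{2j} + x_{2j+1}))`: the blocks with `c_j = 0` are copies of
`α_Cl(2,0)`, those with `c_j = 1` copies of `α_Cl(0,2)`. -/
def pairForm {R : Type*} [CommRing R] {k : ℕ} (c : Fin k → R) (x : Fin (2 * k) → R) : R :=
  ∑ j : Fin k,
    (x ⟨2 * j, by omega⟩ * x ⟨2 * j + 1, by omega⟩ +
      c j * (x ⟨2 * j, by omega⟩ + x ⟨2 * j + 1, by omega⟩))

theorem cliffordForm_shearEquiv {p q k : ℕ} (hp : Even p) (h : p + q = 2 * k)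
    (y : Fin (2 * k) → ZMod 2) :
    cliffordForm p q (fun i => shearEquiv (ZMod 2) (2 * k) y (Fin.cast h i)) =
      pairForm (fun m => ((k - 1 - m : ℕ) : ZMod 2) + if p ≤ 2 * m then 1 else 0) y := by
  obtain ⟨r, rfl⟩ := hp.two_dvd
  set z := Function.extend Fin.val y 0
  rw [cliffordForm_cast h (shearEquiv _ _ y) (shear z) fun _ => rfl, sum_triangle_shear,
    sum_Ico_two_mul_shear z (by omega), ← sum_add_distrib, pairForm, Finset.sum_range]
  refine sum_congr rfl fun j _ => ?_
  simp only [z, extend_val_of_lt y (show 2 * (j : ℕ) < 2 * k by omega),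
    extend_val_of_lt y (show 2 * (j : ℕ) + 1 < 2 * k by omega), Nat.mul_le_mul_left_iff two_pos]
  split_ifs <;> ring

section PairPermutation

variable {k : ℕ}

def pairEquiv (k : ℕ) : Fin k × Fin 2 ≃ Fin (2 * k) :=
  finProdFinEquiv.trans (finCongr (Nat.mul_comm k 2))

theorem mk_two_mul_eq_pairEquiv (j : Fin k) :
    (⟨2 * j, by omega⟩ : Fin (2 * k)) = pairEquiv k (j, 0) := by
  ext
  simp [pairEquiv]

theorem mk_two_mul_add_one_eq_pairEquiv (j : Fin k) :
    (⟨2 * j + 1, by omega⟩ : Fin (2 * k)) = pairEquiv k (j, 1) := by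
  ext
  simp [pairEquiv, add_comm]

def pairPerm (σ : Equiv.Perm (Fin k)) : Equiv.Perm (Fin (2 * k)) :=
  (pairEquiv k).permCongr (σ.prodCongr (Equiv.refl _))

theorem pairPerm_pairEquiv (σ : Equiv.Perm (Fin k)) (j : Fin k) (b : Fin 2) :
    pairPerm σ (pairEquiv k (j, b)) = pairEquiv k (σ j, b) := by
  simp [pairPerm]

theorem pairForm_funCongrLeft_pairPerm {R : Type*} [CommRing R] (c : Fin k → R)
    (σ : Equiv.Perm (Fin k)) (x : Fin (2 * k) → R) :
    pairForm c (LinearEquiv.funCongrLeft R R (pairPerm σ) x) = pairForm (c ∘ σ.symm) x := by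
  simp only [pairForm, LinearEquiv.funCongrLeft_apply, LinearMap.funLeft_apply,
    mk_two_mul_eq_pairEquiv, mk_two_mul_add_one_eq_pairEquiv, pairPerm_pairEquiv]
  conv_rhs => rw [← Equiv.sum_comp σ]
  simp only [Function.comp_apply, Equiv.symm_apply_apply]

end PairPermutation

noncomputable def doublingPerm {k : ℕ} (hk : Odd k) (b : ℕ) : Equiv.Perm (Fin k) :=
  Equiv.ofBijective (fun j => ⟨(2 * j + b) % k, Nat.mod_lt _ hk.pos⟩) <|
    Finite.injective_iff_bijective.mp fun i j hij =>
      Fin.ext <| (Nat.ModEq.cancel_left_of_coprime (Nat.coprime_two_right.mpr hk)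
        (Nat.ModEq.add_right_cancel' b (Fin.mk.inj hij))).eq_of_lt_of_lt i.isLt j.isLt

theorem doublingPerm_val {k : ℕ} (hk : Odd k) {b : ℕ} (hb : b ≤ 1) (j : Fin k) :
    (doublingPerm hk b j : ℕ) = if 2 * j + b < k then 2 * j + b else 2 * j + b - k := by
  change (2 * j + b) % k = _
  split_ifs with h
  · exact Nat.mod_eq_of_lt h
  · rw [Nat.mod_eq_sub_mod (by omega), Nat.mod_eq_of_lt (by omega)]

theorem zmod_two_natCast_eq_ite (m : ℕ) : (m : ZMod 2) = if m % 2 = 1 then 1 else 0 := by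
  rw [← ZMod.natCast_mod]
  rcases Nat.mod_two_eq_zero_or_one m with h | h <;> simp [h]

theorem exists_cliffordForm_eq_pairForm {p q k : ℕ} (hp : Even p) (h : p + q = 2 * k)
    (σ : Equiv.Perm (Fin k)) :
    ∃ G : (Fin (2 * k) → ZMod 2) ≃ₗ[ZMod 2] (Fin (2 * k) → ZMod 2), ∀ x,
      cliffordForm p q (fun i => G x (Fin.cast h i)) =
        pairForm (fun j => ((k - 1 - σ j : ℕ) : ZMod 2) +
          if p ≤ 2 * (σ j : ℕ) then 1 else 0) x :=
  ⟨(LinearEquiv.funCongrLeft _ _ (pairPerm σ.symm)).trans (shearEquiv _ _), fun x => by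
    rw [LinearEquiv.trans_apply, cliffordForm_shearEquiv hp, pairForm_funCongrLeft_pairPerm]
    rfl⟩

/-- for odd `k`, `α_Cl(2k,0)` is equivalent to the direct sum of
`(k+1)/2` copies of `α_Cl(2,0)(u,v) = uv` and `(k−1)/2` copies of
`α_Cl(0,2)(u,v) = uv + u + v`, while `α_Cl(0,2k)` is equivalent to the direct
sum of `(k−1)/2` copies of `α_Cl(2,0)` and `(k+1)/2` copies of `α_Cl(0,2)`. -/
theorem stmt_8 (k : ℕ) (hk : Odd k) :
    let τ₁ : (Fin (2 * k) → ZMod 2) → ZMod 2 := fun x =>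
      ∑ j : Fin k,
        (x ⟨2 * (j : ℕ), by have := j.isLt; omega⟩ *
           x ⟨2 * (j : ℕ) + 1, by have := j.isLt; omega⟩
         + if (k + 1) / 2 ≤ (j : ℕ) then
             x ⟨2 * (j : ℕ), by have := j.isLt; omega⟩ +
               x ⟨2 * (j : ℕ) + 1, by have := j.isLt; omega⟩
           else 0)
    let τ₂ : (Fin (2 * k) → ZMod 2) → ZMod 2 := fun x =>
      ∑ j : Fin k,
        (x ⟨2 * (j : ℕ), by have := j.isLt; omega⟩ *
           x ⟨2 * (j : ℕ) + 1, by have := j.isLt; omega⟩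
         + if (k - 1) / 2 ≤ (j : ℕ) then
             x ⟨2 * (j : ℕ), by have := j.isLt; omega⟩ +
               x ⟨2 * (j : ℕ) + 1, by have := j.isLt; omega⟩
           else 0)
    let α₁ : (Fin (2 * k) → ZMod 2) → ZMod 2 := fun x =>
      cliffordForm (2 * k) 0 (fun i => x (Fin.cast (by omega) i))
    let α₂ : (Fin (2 * k) → ZMod 2) → ZMod 2 := fun x =>
      cliffordForm 0 (2 * k) (fun i => x (Fin.cast (by omega) i))
    (∃ G : (Fin (2 * k) → ZMod 2) ≃ₗ[ZMod 2] (Fin (2 * k) → ZMod 2),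
        ∀ x, α₁ (G x) = τ₁ x) ∧
    (∃ G : (Fin (2 * k) → ZMod 2) ≃ₗ[ZMod 2] (Fin (2 * k) → ZMod 2),
        ∀ x, α₂ (G x) = τ₂ x) := by
  intro τ₁ τ₂ α₁ α₂
  obtain ⟨l, hl⟩ := id hk
  obtain ⟨G₁, hG₁⟩ := exists_cliffordForm_eq_pairForm (even_two_mul k) (Nat.add_zero _)
    (doublingPerm hk 0)
  obtain ⟨G₂, hG₂⟩ := exists_cliffordForm_eq_pairForm Even.zero (Nat.zero_add _)
    (doublingPerm hk 1)
  have hc₁ : ∀ j : Fin k, ((k - 1 - doublingPerm hk 0 j : ℕ) : ZMod 2) +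
      (if 2 * k ≤ 2 * (doublingPerm hk 0 j : ℕ) then 1 else 0) =
      if (k + 1) / 2 ≤ (j : ℕ) then 1 else 0 := fun j => by
    rw [doublingPerm_val hk zero_le_one, zmod_two_natCast_eq_ite]
    split_ifs <;> first | omega | rfl
  have hc₂ : ∀ j : Fin k, ((k - 1 - doublingPerm hk 1 j : ℕ) : ZMod 2) +
      (if 0 ≤ 2 * (doublingPerm hk 1 j : ℕ) then 1 else 0) =
      if (k - 1) / 2 ≤ (j : ℕ) then 1 else 0 := fun j => by
    rw [doublingPerm_val hk le_rfl, zmod_two_natCast_eq_ite]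
    split_ifs <;> first | omega | rfl
  exact ⟨⟨G₁, fun x => by simp only [α₁, τ₁, hG₁, pairForm, hc₁, boole_mul]⟩,
    ⟨G₂, fun x => by simp only [α₂, τ₂, hG₂, pairForm, hc₂, boole_mul]⟩⟩
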